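/- arXiv:1410.6299 — 3 statements merged into one kernel-verified Lean document; each statement's English description precedes it below -/
import Mathlib

section
/- Let (X_n) be a sequence of topological vector spaces each having the Heine-Borel property, and let X = ∏_{n=1}^∞ X_n with the product topology. Then every bb-bounded linear operator on X is b-compact and every nb-bounded linear operator on X is n-compact. -/
/-!
A bounded set in `∏ Xₙ` has bounded coordinate projections, whose closures are compact by the
Heine–Borel property of the factors; the closure of the set lies in the product of these compact
sets, so it is compact by Tychonoff. Thus the product has the Heine–Borel property, and both
claims follow because the operators in question have bounded images.
-/

open Topology Bornology Pointwise

section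

variable {𝕜 : Type*} [NormedDivisionRing 𝕜]

/-- Unlike `IsVonNBounded.closure`, no `T1Space`: only scalars `c ≠ 0` are used, so `c • W` is
closed. -/
theorem Bornology.IsVonNBounded.closure_of_regularSpace {E : Type*} [AddCommGroup E] [Module 𝕜 E]
    [TopologicalSpace E] [RegularSpace E] [ContinuousConstSMul 𝕜 E] {B : Set E}
    (hB : IsVonNBounded 𝕜 B) : IsVonNBounded 𝕜 (_root_.closure B) := by
  intro V hV
  obtain ⟨W, hW, hW_closed, hWV⟩ := exists_mem_nhds_isClosed_subset hV
  filter_upwards [hB hW, eventually_ne_cobounded 0] with c hc hc0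
  calc _root_.closure B ⊆ c • W := closure_minimal hc (hW_closed.smul_of_ne_zero hc0)
    _ ⊆ c • V := Set.smul_set_mono hWV

theorem isCompact_of_isClosed_isVonNBounded_pi {ι : Type*} {E : ι → Type*}
    [∀ i, AddCommGroup (E i)] [∀ i, Module 𝕜 (E i)] [∀ i, TopologicalSpace (E i)]
    [∀ i, RegularSpace (E i)] [∀ i, ContinuousConstSMul 𝕜 (E i)]
    (hHB : ∀ i, ∀ s : Set (E i), IsClosed s → IsVonNBounded 𝕜 s → IsCompact s)
    {S : Set (∀ i, E i)} (hS_closed : IsClosed S) (hS : IsVonNBounded 𝕜 S) : IsCompact S := by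
  have hproj : ∀ i, IsCompact (closure (Function.eval i '' S)) := fun i =>
    hHB i _ isClosed_closure (isVonNBounded_pi_iff.mp hS i).closure_of_regularSpace
  refine (isCompact_univ_pi hproj).of_isClosed_subset hS_closed fun x hx i _ => ?_
  exact subset_closure ⟨x, hx, rfl⟩

end

theorem stmt8 {X : ℕ → Type*} [∀ n, AddCommGroup (X n)] [∀ n, Module ℝ (X n)]
    [∀ n, TopologicalSpace (X n)] [∀ n, IsTopologicalAddGroup (X n)]
    [∀ n, ContinuousSMul ℝ (X n)]
    (hHB : ∀ n, ∀ s : Set (X n), IsClosed s → IsVonNBounded ℝ s → IsCompact s) :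
    (∀ T : (∀ n, X n) →ₗ[ℝ] (∀ n, X n),
        (∀ B : Set (∀ n, X n), IsVonNBounded ℝ B → IsVonNBounded ℝ (T '' B)) →
        ∀ B : Set (∀ n, X n), IsVonNBounded ℝ B → IsCompact (closure (T '' B))) ∧
    (∀ T : (∀ n, X n) →ₗ[ℝ] (∀ n, X n),
        (∃ U ∈ 𝓝 (0 : ∀ n, X n), IsVonNBounded ℝ (T '' U)) →
        ∃ U ∈ 𝓝 (0 : ∀ n, X n), IsCompact (closure (T '' U))) := by
  have hclosure : ∀ B : Set (∀ n, X n), IsVonNBounded ℝ B → IsCompact (closure B) :=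
    fun B hB => isCompact_of_isClosed_isVonNBounded_pi hHB isClosed_closure
      hB.closure_of_regularSpace
  exact ⟨fun T hT B hB => hclosure _ (hT B hB),
    fun T ⟨U, hU, hTU⟩ => ⟨U, hU, hclosure _ hTU⟩⟩
end

section
/- Let X, Y, Z be locally convex spaces, θ : X × Y → X ⊗_π Y the canonical bilinear map, and φ : X × Y → Z an n-bounded bilinear mapping. Then the unique linear map T : X ⊗_π Y → Z with T ∘ θ = φ is nb-bounded. -/
open Topology Bornology TensorProduct Filter

theorem Bornology.IsVonNBounded.convexHull {E : Type*} [AddCommGroup E] [Module ℝ E]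
    [TopologicalSpace E] [LocallyConvexSpace ℝ E] {s : Set E} (hs : IsVonNBounded ℝ s) :
    IsVonNBounded ℝ (convexHull ℝ s) := by
  rw [(LocallyConvexSpace.convex_basis_zero ℝ E).isVonNBounded_iff]
  rintro W ⟨hW, hWconvex⟩
  filter_upwards [hs hW] with a ha
  exact convexHull_min ha (hWconvex.smul a)

theorem TensorProduct.image_image2_tmul_of_tmul_eq {R M N P : Type*} [CommSemiring R]
    [AddCommMonoid M] [AddCommMonoid N] [AddCommMonoid P] [Module R M] [Module R N] [Module R P]
    {φ : M →ₗ[R] N →ₗ[R] P} {T : M ⊗[R] N →ₗ[R] P} (hT : ∀ x y, T (x ⊗ₜ[R] y) = φ x y)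
    (U : Set M) (V : Set N) :
    T '' Set.image2 (fun x y => x ⊗ₜ[R] y) U V = Set.image2 (fun x y => φ x y) U V := by
  rw [Set.image_image2]
  exact Set.image2_congr fun x _ y _ => hT x y

theorem stmt13_general {X Y Z : Type*}
    [AddCommGroup X] [Module ℝ X] [TopologicalSpace X]
    [AddCommGroup Y] [Module ℝ Y] [TopologicalSpace Y]
    [AddCommGroup Z] [Module ℝ Z] [TopologicalSpace Z] [LocallyConvexSpace ℝ Z]
    [TopologicalSpace (X ⊗[ℝ] Y)]
    -- the projective tensor topology: basic zero neighborhoods are `co (U ⊗ V)`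
    (hπ : (𝓝 (0 : X ⊗[ℝ] Y)).HasBasis
      (fun UV : Set X × Set Y => UV.1 ∈ 𝓝 (0 : X) ∧ UV.2 ∈ 𝓝 (0 : Y))
      (fun UV => convexHull ℝ (Set.image2 (fun x y => x ⊗ₜ[ℝ] y) UV.1 UV.2)))
    (φ : X →ₗ[ℝ] Y →ₗ[ℝ] Z)
    -- `φ` is `n`-bounded
    (hφ : ∃ U ∈ 𝓝 (0 : X), ∃ V ∈ 𝓝 (0 : Y),
      IsVonNBounded ℝ (Set.image2 (fun x y => φ x y) U V))
    (T : X ⊗[ℝ] Y →ₗ[ℝ] Z) (hT : ∀ x y, T (x ⊗ₜ[ℝ] y) = φ x y) :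
    ∃ W ∈ 𝓝 (0 : X ⊗[ℝ] Y), IsVonNBounded ℝ (T '' W) := by
  obtain ⟨U, hU, V, hV, hφUV⟩ := hφ
  refine ⟨convexHull ℝ (Set.image2 (fun x y => x ⊗ₜ[ℝ] y) U V),
    hπ.mem_of_mem (i := (U, V)) ⟨hU, hV⟩, ?_⟩
  rw [T.image_convexHull, image_image2_tmul_of_tmul_eq hT]
  exact hφUV.convexHull

theorem stmt13 {X Y Z : Type*}
    [AddCommGroup X] [Module ℝ X] [TopologicalSpace X] [IsTopologicalAddGroup X]
    [ContinuousSMul ℝ X] [LocallyConvexSpace ℝ X]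
    [AddCommGroup Y] [Module ℝ Y] [TopologicalSpace Y] [IsTopologicalAddGroup Y]
    [ContinuousSMul ℝ Y] [LocallyConvexSpace ℝ Y]
    [AddCommGroup Z] [Module ℝ Z] [TopologicalSpace Z] [IsTopologicalAddGroup Z]
    [ContinuousSMul ℝ Z] [LocallyConvexSpace ℝ Z]
    [TopologicalSpace (X ⊗[ℝ] Y)]
    -- the projective tensor topology: basic zero neighborhoods are `co (U ⊗ V)`
    (hπ : (𝓝 (0 : X ⊗[ℝ] Y)).HasBasis
      (fun UV : Set X × Set Y => UV.1 ∈ 𝓝 (0 : X) ∧ UV.2 ∈ 𝓝 (0 : Y))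
      (fun UV => convexHull ℝ (Set.image2 (fun x y => x ⊗ₜ[ℝ] y) UV.1 UV.2)))
    (φ : X →ₗ[ℝ] Y →ₗ[ℝ] Z)
    -- `φ` is `n`-bounded
    (hφ : ∃ U ∈ 𝓝 (0 : X), ∃ V ∈ 𝓝 (0 : Y),
      IsVonNBounded ℝ (Set.image2 (fun x y => φ x y) U V))
    (T : X ⊗[ℝ] Y →ₗ[ℝ] Z) (hT : ∀ x y, T (x ⊗ₜ[ℝ] y) = φ x y) :
    ∃ W ∈ 𝓝 (0 : X ⊗[ℝ] Y), IsVonNBounded ℝ (T '' W) :=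
  stmt13_general hπ φ hφ T hT
end

section
/- Let X, Y, Z, W be locally convex spaces, and T : X → Y, S : Z → W nb-bounded linear operators. Then the tensor product operator T ⊗ S : X ⊗_π Z → Y ⊗_π W is nb-bounded. -/
open Topology Bornology TensorProduct Filter
open scoped Pointwise

/-! If `T(U)` and `S(V)` are bounded, then `(T ⊗ S)(co(U ⊗ V)) = co(T(U) ⊗ S(V))`, and such a set is
bounded: given a basic neighbourhood `co(U' ⊗ V')`, first fix `b ≠ 0` with `S(V) ⊆ b • V'`; then
`T(U) ⊆ (c / b) • U'` for all large `c`, so `T(U) ⊗ S(V) ⊆ c • (U' ⊗ V')`, and convex hulls commute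
with scaling. -/

theorem Absorbs.convexHull {𝕜 E : Type*} [CommSemiring 𝕜] [PartialOrder 𝕜] [Bornology 𝕜]
    [AddCommMonoid E] [Module 𝕜 E] {s t : Set E} (h : Absorbs 𝕜 s t) :
    Absorbs 𝕜 (convexHull 𝕜 s) (convexHull 𝕜 t) :=
  h.eventually.mono fun a hts => (convexHull_mono hts).trans_eq (convexHull_smul a s)

theorem TensorProduct.image_map_convexHull_image2_tmul {R M N P Q : Type*}
    [CommSemiring R] [PartialOrder R]
    [AddCommMonoid M] [Module R M] [AddCommMonoid N] [Module R N]
    [AddCommMonoid P] [Module R P] [AddCommMonoid Q] [Module R Q]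
    (f : M →ₗ[R] P) (g : N →ₗ[R] Q) (s : Set M) (t : Set N) :
    map f g '' convexHull R (Set.image2 (· ⊗ₜ ·) s t) =
      convexHull R (Set.image2 (· ⊗ₜ ·) (f '' s) (g '' t)) := by
  rw [LinearMap.image_convexHull, Set.image_image2, Set.image2_image_left,
    Set.image2_image_right]
  simp only [map_tmul]

theorem TensorProduct.image2_tmul_smul_subset {R M N : Type*} [CommSemiring R]
    [AddCommMonoid M] [Module R M] [AddCommMonoid N] [Module R N]
    (a b : R) (s : Set M) (t : Set N) :
    Set.image2 (· ⊗ₜ[R] ·) (a • s) (b • t) ⊆ (a * b) • Set.image2 (· ⊗ₜ ·) s t := by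
  rintro _ ⟨_, ⟨x, hx, rfl⟩, _, ⟨y, hy, rfl⟩, rfl⟩
  exact ⟨x ⊗ₜ y, Set.mem_image2_of_mem hx hy, (smul_tmul_smul a b x y).symm⟩

theorem Absorbs.image2_tmul {𝕜 M N : Type*} [NormedField 𝕜]
    [AddCommMonoid M] [Module 𝕜 M] [AddCommMonoid N] [Module 𝕜 N]
    {s A : Set M} {t B : Set N} (hA : Absorbs 𝕜 s A) (hB : Absorbs 𝕜 t B) :
    Absorbs 𝕜 (Set.image2 (· ⊗ₜ[𝕜] ·) s t) (Set.image2 (· ⊗ₜ ·) A B) := by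
  rcases (cobounded 𝕜).eq_or_neBot with h | _
  · simp [Absorbs, h]
  obtain ⟨b, hBb, hb⟩ := (hB.eventually.and (eventually_ne_cobounded 0)).exists
  filter_upwards [(tendsto_mul_right_cobounded (inv_ne_zero hb)).eventually hA.eventually]
    with c hAc
  calc Set.image2 (· ⊗ₜ ·) A B ⊆ Set.image2 (· ⊗ₜ ·) ((c * b⁻¹) • s) (b • t) :=
        Set.image2_subset hAc hBb
    _ ⊆ (c * b⁻¹ * b) • Set.image2 (· ⊗ₜ ·) s t := TensorProduct.image2_tmul_smul_subset _ _ _ _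
    _ = c • Set.image2 (· ⊗ₜ ·) s t := by rw [inv_mul_cancel_right₀ hb]

theorem isVonNBounded_convexHull_image2_tmul {𝕜 E F : Type*} [NormedField 𝕜] [PartialOrder 𝕜]
    [AddCommMonoid E] [Module 𝕜 E] [TopologicalSpace E]
    [AddCommMonoid F] [Module 𝕜 F] [TopologicalSpace F] [TopologicalSpace (E ⊗[𝕜] F)]
    (hπ : (𝓝 (0 : E ⊗[𝕜] F)).HasBasis
      (fun UV : Set E × Set F => UV.1 ∈ 𝓝 (0 : E) ∧ UV.2 ∈ 𝓝 (0 : F))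
      (fun UV => convexHull 𝕜 (Set.image2 (· ⊗ₜ[𝕜] ·) UV.1 UV.2)))
    {A : Set E} {B : Set F} (hA : IsVonNBounded 𝕜 A) (hB : IsVonNBounded 𝕜 B) :
    IsVonNBounded 𝕜 (convexHull 𝕜 (Set.image2 (· ⊗ₜ[𝕜] ·) A B)) :=
  hπ.isVonNBounded_iff.2 fun _ hUV => ((hA hUV.1).image2_tmul (hB hUV.2)).convexHull

theorem stmt15_general {X Y Z W : Type*}
    [AddCommGroup X] [Module ℝ X] [TopologicalSpace X]
    [AddCommGroup Y] [Module ℝ Y] [TopologicalSpace Y]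
    [AddCommGroup Z] [Module ℝ Z] [TopologicalSpace Z]
    [AddCommGroup W] [Module ℝ W] [TopologicalSpace W]
    [TopologicalSpace (X ⊗[ℝ] Z)] [TopologicalSpace (Y ⊗[ℝ] W)]
    -- projective tensor topology on `X ⊗ Z`
    (hπXZ : (𝓝 (0 : X ⊗[ℝ] Z)).HasBasis
      (fun UV : Set X × Set Z => UV.1 ∈ 𝓝 (0 : X) ∧ UV.2 ∈ 𝓝 (0 : Z))
      (fun UV => convexHull ℝ (Set.image2 (fun x z => x ⊗ₜ[ℝ] z) UV.1 UV.2)))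
    -- projective tensor topology on `Y ⊗ W`
    (hπYW : (𝓝 (0 : Y ⊗[ℝ] W)).HasBasis
      (fun UV : Set Y × Set W => UV.1 ∈ 𝓝 (0 : Y) ∧ UV.2 ∈ 𝓝 (0 : W))
      (fun UV => convexHull ℝ (Set.image2 (fun y w => y ⊗ₜ[ℝ] w) UV.1 UV.2)))
    (T : X →ₗ[ℝ] Y) (S : Z →ₗ[ℝ] W)
    (hT : ∃ U ∈ 𝓝 (0 : X), IsVonNBounded ℝ (T '' U))
    (hS : ∃ V ∈ 𝓝 (0 : Z), IsVonNBounded ℝ (S '' V)) :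
    ∃ O ∈ 𝓝 (0 : X ⊗[ℝ] Z),
      IsVonNBounded ℝ (TensorProduct.map T S '' O) := by
  obtain ⟨U, hU, hTU⟩ := hT
  obtain ⟨V, hV, hSV⟩ := hS
  refine ⟨_, hπXZ.mem_of_mem (i := (U, V)) ⟨hU, hV⟩, ?_⟩
  rw [image_map_convexHull_image2_tmul]
  exact isVonNBounded_convexHull_image2_tmul hπYW hTU hSV

theorem stmt15 {X Y Z W : Type*}
    [AddCommGroup X] [Module ℝ X] [TopologicalSpace X] [IsTopologicalAddGroup X]
    [ContinuousSMul ℝ X] [LocallyConvexSpace ℝ X]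
    [AddCommGroup Y] [Module ℝ Y] [TopologicalSpace Y] [IsTopologicalAddGroup Y]
    [ContinuousSMul ℝ Y] [LocallyConvexSpace ℝ Y]
    [AddCommGroup Z] [Module ℝ Z] [TopologicalSpace Z] [IsTopologicalAddGroup Z]
    [ContinuousSMul ℝ Z] [LocallyConvexSpace ℝ Z]
    [AddCommGroup W] [Module ℝ W] [TopologicalSpace W] [IsTopologicalAddGroup W]
    [ContinuousSMul ℝ W] [LocallyConvexSpace ℝ W]
    [TopologicalSpace (X ⊗[ℝ] Z)] [TopologicalSpace (Y ⊗[ℝ] W)]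
    -- projective tensor topology on `X ⊗ Z`
    (hπXZ : (𝓝 (0 : X ⊗[ℝ] Z)).HasBasis
      (fun UV : Set X × Set Z => UV.1 ∈ 𝓝 (0 : X) ∧ UV.2 ∈ 𝓝 (0 : Z))
      (fun UV => convexHull ℝ (Set.image2 (fun x z => x ⊗ₜ[ℝ] z) UV.1 UV.2)))
    -- projective tensor topology on `Y ⊗ W`
    (hπYW : (𝓝 (0 : Y ⊗[ℝ] W)).HasBasis
      (fun UV : Set Y × Set W => UV.1 ∈ 𝓝 (0 : Y) ∧ UV.2 ∈ 𝓝 (0 : W))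
      (fun UV => convexHull ℝ (Set.image2 (fun y w => y ⊗ₜ[ℝ] w) UV.1 UV.2)))
    (T : X →ₗ[ℝ] Y) (S : Z →ₗ[ℝ] W)
    (hT : ∃ U ∈ 𝓝 (0 : X), IsVonNBounded ℝ (T '' U))
    (hS : ∃ V ∈ 𝓝 (0 : Z), IsVonNBounded ℝ (S '' V)) :
    ∃ O ∈ 𝓝 (0 : X ⊗[ℝ] Z),
      IsVonNBounded ℝ (TensorProduct.map T S '' O) :=
  stmt15_general hπXZ hπYW T S hT hS
end
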